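/- Let $E$ be a metric space, $J \subseteq E \times E$, and $\phi : J \to C([0,1],E)$ a path function, meaning $\phi(x,y)_0 = x$ and $\phi(x,y)_1 = y$ for all $(x,y) \in J$. Let $p \geq 1$, let $\mathbf z \in D([0,T],E)$ be a c\`adl\`ag path all of whose jumps $(\mathbf z_{t-}, \mathbf z_t)$ lie in $J$, and suppose there exists $C > 0$ such that $\|\phi(\mathbf z_{t-},\mathbf z_t)\|_{p\text{-var};[0,1]} \leq C\, d(\mathbf z_{t-},\mathbf z_t)$ for every jump time $t$ of $\mathbf z$. Then the continuous path $\mathbf z^\phi$ obtained by connecting the jumps of $\mathbf z$ with the paths $\phi(\mathbf z_{t-},\mathbf z_t)$ (traversed over inserted fictitious time intervals, then reparametrised to $[0,T]$) satisfies $\|\mathbf z^\phi\|_{p\text{-var};[0,T]}^p \leq R\, \|\mathbf z\|_{p\text{-var};[0,T]}^p$ where $R = 1 + 2^p + 3^{p-1} + C^p(1 + 2^p + 2\cdot 3^{p-1})$. -/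

import Mathlib

open Set
open scoped ENNReal

/-- `eVar p x s t = ‖x‖_{p-var;[s,t]}^p ∈ [0,∞]`: the supremum, over all partitions
`s = u₀ ≤ u₁ ≤ ⋯ ≤ uₙ = t`, of `∑ edist (x uᵢ) (x uᵢ₊₁) ^ p`. -/
noncomputable def eVar {E : Type*} [PseudoEMetricSpace E] (p : ℝ) (x : ℝ → E) (s t : ℝ) :
    ℝ≥0∞ :=
  ⨆ (n : ℕ) (u : ℕ → ℝ) (_ : Monotone u) (_ : u 0 = s) (_ : u n = t),
    ∑ i ∈ Finset.range n, edist (x (u i)) (x (u (i + 1))) ^ p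

open Filter

/-!
Split each step `[a, a']` of a partition for `x` by the triangle inequality into at most three
pieces: the rest of the connecting path `Φ j` that `x` is traversing at time `a`, a piece of `z`
from `z (σ a)` to the point where `x` enters the next inserted interval `[s k, u k]` (the left
limit `zm k`), and the beginning of `Φ k`; thus each step costs at most `3 ^ (p - 1)` times the
sum of the `p`-th powers of the pieces. The pieces of `z` form a chain through values and left
limits of `z`, ordered in time; left limits being limits of values, its `p`-sum is at most
`‖z‖ ^ p`. For a fixed jump `k` the pieces of `Φ k` follow a monotone chain in `[0, 1]`, so they
cost at most `‖Φ k‖ ^ p ≤ C ^ p d(jump k) ^ p`, and the sum of all `d(jump k) ^ p` is again at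
most `‖z‖ ^ p`. A step that starts outside the inserted intervals with `σ a = t k` and enters
`[s k, u k]` runs through the jump backwards; it happens at most once per jump and costs
`C ^ p d(jump k) ^ p` more. In total `‖x‖ ^ p ≤ 3 ^ (p - 1) (1 + 2 C ^ p) ‖z‖ ^ p ≤ R ‖z‖ ^ p`.
-/

open Function Topology

section PVariation

open Finset

theorem Finset.sum_range_two_mul {M : Type*} [AddCommMonoid M] (g : ℕ → M) (m : ℕ) :
    ∑ c ∈ range (2 * m), g c = ∑ i ∈ range m, (g (2 * i) + g (2 * i + 1)) := by
  induction m with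
  | zero => simp
  | succ m ih =>
    rw [mul_add, mul_one, sum_range_succ, sum_range_succ, sum_range_succ, ih, add_assoc]

theorem ENNReal.add_le_tsum {ι : Type*} {f : ι → ℝ≥0∞} {j k : ι} (h : j ≠ k) :
    f j + f k ≤ ∑' i, f i := by
  classical
  simpa [sum_pair h] using ENNReal.sum_le_tsum (f := f) {j, k}

theorem ENNReal.rpow_add_add_le_mul_rpow_add_rpow_add_rpow (x y z : ℝ≥0∞) {p : ℝ}
    (hp : 1 ≤ p) :
    (x + y + z) ^ p ≤ 3 ^ (p - 1) * (x ^ p + y ^ p + z ^ p) := by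
  simpa [Fin.sum_univ_three, add_assoc] using
    ENNReal.rpow_sum_le_const_mul_sum_rpow univ ![x, y, z] hp

theorem Monotone.sum_ite_lt_le_le {v : ℕ → ℝ} (hv : Monotone v) (c : ℝ) (x : ℝ≥0∞)
    (n : ℕ) :
    ∑ i ∈ range n, (if v i < c ∧ c ≤ v (i + 1) then x else 0) ≤ x := by
  have hcard : #{i ∈ range n | v i < c ∧ c ≤ v (i + 1)} ≤ 1 := by
    refine card_le_one.2 fun i hi j hj => ?_
    simp only [mem_filter] at hi hj
    by_contra hij
    rcases Nat.lt_or_gt_of_ne hij with h | h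
    · exact (hi.2.2.trans (hv h)).not_gt hj.2.1
    · exact (hj.2.2.trans (hv h)).not_gt hi.2.1
  rw [sum_ite, sum_const_zero, add_zero, sum_const, nsmul_eq_mul]
  exact mul_le_of_le_one_left bot_le (by exact_mod_cast hcard)

theorem mem_closure_image_Icc_of_tendsto {X : Type*} [TopologicalSpace X] {f : ℝ → X}
    {c d : ℝ} {y : X} (hcd : c < d) (h : Tendsto f (𝓝[<] d) (𝓝 y)) :
    y ∈ closure (f '' Icc c d) :=
  mem_closure_of_tendsto h <| eventually_of_mem (Ioo_mem_nhdsLT hcd) fun _ hw =>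
    mem_image_of_mem f (Ioo_subset_Icc_self hw)

variable {E : Type*} [PseudoEMetricSpace E] {p a b : ℝ} {f : ℝ → E}

theorem le_eVar {n : ℕ} {u : ℕ → ℝ} (hu : Monotone u) (h0 : u 0 = a) (hn : u n = b) :
    ∑ i ∈ range n, edist (f (u i)) (f (u (i + 1))) ^ p ≤ eVar p f a b :=
  le_iSup_of_le n <| le_iSup_of_le u <| le_iSup_of_le hu <| le_iSup_of_le h0 <|
    le_iSup_of_le hn le_rfl

theorem eVar_le {M : ℝ≥0∞}
    (h : ∀ n (u : ℕ → ℝ), Monotone u → u 0 = a → u n = b →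
      ∑ i ∈ range n, edist (f (u i)) (f (u (i + 1))) ^ p ≤ M) : eVar p f a b ≤ M :=
  iSup_le fun n => iSup_le fun u => iSup_le fun hu => iSup_le fun h0 => iSup_le (h n u hu h0)

theorem sum_edist_rpow_le_eVar {m : ℕ} {w : ℕ → ℝ} (hw : ∀ i < m, w i ≤ w (i + 1))
    (ha : a ≤ w 0) (hb : w m ≤ b) :
    ∑ i ∈ range m, edist (f (w i)) (f (w (i + 1))) ^ p ≤ eVar p f a b := by
  let u : ℕ → ℝ := fun
    | 0 => a
    | c + 1 => if c ≤ m then w c else b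
  have hu : Monotone u := by
    refine monotone_nat_of_le_succ fun c => ?_
    rcases c with _ | c
    · simpa [u] using ha
    · simp only [u]
      split_ifs with h₁ h₂ h₂
      · exact hw c (by omega)
      · exact (show c = m by omega) ▸ hb
      · omega
      · exact le_rfl
  have hu' : ∀ i ≤ m, u (i + 1) = w i := fun i hi => if_pos hi
  calc ∑ i ∈ range m, edist (f (w i)) (f (w (i + 1))) ^ p
      = ∑ i ∈ range m, edist (f (u (i + 1))) (f (u (i + 1 + 1))) ^ p :=
        sum_congr rfl fun i hi => by
          have hi := mem_range.1 hi
          rw [hu' i hi.le, hu' (i + 1) hi]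
    _ ≤ ∑ i ∈ range (m + 1 + 1), edist (f (u i)) (f (u (i + 1))) ^ p := by
        rw [sum_range_succ, sum_range_succ']
        exact le_self_add.trans le_self_add
    _ ≤ eVar p f a b := le_eVar hu rfl (by simp [u])

theorem edist_rpow_le_eVar (hab : a ≤ b) : edist (f a) (f b) ^ p ≤ eVar p f a b := by
  simpa using sum_edist_rpow_le_eVar (f := f) (p := p) (m := 1)
    (w := fun i => if i = 0 then a else b) (by simpa using hab) le_rfl le_rfl

theorem sum_edist_rpow_le_eVar_of_mem_closure {m : ℕ} {τ : ℕ → ℝ} {y : ℕ → E}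
    (hy : ∀ i < m, y i ∈ closure (f '' Icc (τ i) (τ (i + 1)))) (ha : a ≤ τ 0)
    (hb : τ m ≤ b) :
    ∑ i ∈ range m, (edist (f (τ i)) (y i) ^ p + edist (y i) (f (τ (i + 1))) ^ p) ≤
      eVar p f a b := by
  have hseq : ∀ i, ∃ w : ℕ → ℝ, i < m →
      (∀ n, w n ∈ Icc (τ i) (τ (i + 1))) ∧ Tendsto (f ∘ w) atTop (𝓝 (y i)) := by
    intro i
    by_cases hi : i < m
    · obtain ⟨g, hg, hlim⟩ := mem_closure_iff_seq_limit.1 (hy i hi)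
      choose w hw hfw using hg
      exact ⟨w, fun _ => ⟨hw, by simpa [comp_def, hfw] using hlim⟩⟩
    · exact ⟨0, fun h => absurd h hi⟩
  choose w hw using hseq
  have hchain : ∀ n, ∑ i ∈ range m,
      (edist (f (τ i)) (f (w i n)) ^ p + edist (f (w i n)) (f (τ (i + 1))) ^ p) ≤
        eVar p f a b := by
    intro n
    have := sum_edist_rpow_le_eVar (f := f) (p := p) (m := 2 * m)
      (w := fun c => if c % 2 = 0 then τ (c / 2) else w (c / 2) n) ?_ (by simpa using ha)
      (by simpa using hb)
    · rw [sum_range_two_mul] at this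
      refine this.trans_eq' (sum_congr rfl fun i _ => ?_)
      have h₂ : (2 * i + 1 + 1) % 2 = 0 := by omega
      simp [h₂, show (2 * i + 1) / 2 = i by omega, show (2 * i + 1 + 1) / 2 = i + 1 by omega]
    · intro c hc
      rcases Nat.even_or_odd' c with ⟨i, rfl | rfl⟩
      · have h₁ : (2 * i + 1) % 2 ≠ 0 := by omega
        simpa [h₁, show (2 * i + 1) / 2 = i by omega] using ((hw i (by omega)).1 n).1
      · have h₁ : (2 * i + 1 + 1) % 2 = 0 := by omega
        simpa [h₁, show (2 * i + 1) / 2 = i by omega, show (2 * i + 1 + 1) / 2 = i + 1 by omega]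
          using ((hw i (by omega)).1 n).2
  refine le_of_tendsto' (x := atTop) (tendsto_finsetSum (range m) fun i hi => ?_) hchain
  have hlim := (hw i (mem_range.1 hi)).2
  exact ((tendsto_const_nhds.edist hlim).ennrpow_const p).add
    ((hlim.edist tendsto_const_nhds).ennrpow_const p)

theorem sum_edist_rpow_le_eVar_of_tendsto {S : Finset ℝ} {ℓ : ℝ → E}
    (hS : ∀ r ∈ S, r ∈ Ioc a b) (hℓ : ∀ r ∈ S, Tendsto f (𝓝[<] r) (𝓝 (ℓ r))) :
    ∑ r ∈ S, edist (ℓ r) (f r) ^ p ≤ eVar p f a b := by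
  rcases S.eq_empty_or_nonempty with rfl | hne
  · simp
  set e := S.orderEmbOfFin rfl
  let τ : ℕ → ℝ := fun
    | 0 => a
    | j + 1 => if h : j < #S then e ⟨j, h⟩ else b
  have hτ : ∀ j (h : j < #S), τ (j + 1) = e ⟨j, h⟩ := fun j h => dif_pos h
  have hτS : ∀ j < #S, τ (j + 1) ∈ S := fun j h => hτ j h ▸ S.orderEmbOfFin_mem rfl _
  have hlt : ∀ j < #S, τ j < τ (j + 1) := by
    rintro (_ | j) hj
    · exact (hS _ (hτS 0 hj)).1
    · rw [hτ j (by omega), hτ (j + 1) hj]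
      exact e.strictMono (Fin.mk_lt_mk.2 j.lt_succ_self)
  have hchain := sum_edist_rpow_le_eVar_of_mem_closure (f := f) (p := p) (m := #S)
    (y := fun j => ℓ (τ (j + 1)))
    (fun j hj => mem_closure_image_Icc_of_tendsto (hlt j hj) (hℓ _ (hτS j hj))) le_rfl
    (by
      obtain ⟨j, hj⟩ := Nat.exists_eq_add_one_of_ne_zero hne.card_pos.ne'
      exact hj ▸ (hS _ (hτS j (by omega))).2)
  calc ∑ r ∈ S, edist (ℓ r) (f r) ^ p
      = ∑ j ∈ range #S, edist (ℓ (τ (j + 1))) (f (τ (j + 1))) ^ p := by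
        conv_lhs => rw [← S.map_orderEmbOfFin_univ rfl, sum_map]
        rw [← Fin.sum_univ_eq_sum_range]
        exact sum_congr rfl fun j _ => by rw [hτ j j.2]; rfl
    _ ≤ _ := (sum_le_sum fun _ _ => le_add_self).trans hchain

theorem tsum_edist_rpow_le_eVar {ι : Type*} {t : ι → ℝ} {ℓ : ι → E} (ht : Injective t)
    (htab : ∀ k, t k ∈ Ioc a b) (hℓ : ∀ k, Tendsto f (𝓝[<] t k) (𝓝 (ℓ k))) :
    ∑' k, edist (ℓ k) (f (t k)) ^ p ≤ eVar p f a b := by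
  classical
  rw [ENNReal.tsum_eq_iSup_sum]
  refine iSup_le fun F => ?_
  calc ∑ k ∈ F, edist (ℓ k) (f (t k)) ^ p
      = ∑ r ∈ F.image t, edist (extend t ℓ f r) (f r) ^ p := by
        rw [sum_image ht.injOn]
        simp only [ht.extend_apply]
    _ ≤ eVar p f a b := sum_edist_rpow_le_eVar_of_tendsto (by simpa using fun k _ => htab k)
        (by simpa [ht.extend_apply] using fun k _ => hℓ k)

end PVariation

/-- The path `x = z^φ`: the jump of `z` at time `t k`, from the left limit `zm k` to `z (t k)`,
is traversed along `Φ k = φ (zm k) (z (t k))` over the inserted interval `[s k, u k]`, and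
`x = z ∘ σ` off these intervals. -/
structure JumpInterpolation (E ι : Type*) [TopologicalSpace E] where
  T : ℝ
  z : ℝ → E
  x : ℝ → E
  t : ι → ℝ
  zm : ι → E
  Φ : ι → ℝ → E
  s : ι → ℝ
  u : ι → ℝ
  σ : ℝ → ℝ
  t_injective : Injective t
  t_mem : ∀ k, t k ∈ Ioc 0 T
  tendsto_zm : ∀ k, Tendsto z (𝓝[<] t k) (𝓝 (zm k))
  s_lt_u : ∀ k, s k < u k
  Icc_subset : ∀ k, Icc (s k) (u k) ⊆ Icc 0 T
  monotoneOn_σ : MonotoneOn σ (Icc 0 T)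
  σ_zero : σ 0 = 0
  σ_T : σ T = T
  σ_eq : ∀ k, ∀ w ∈ Icc (s k) (u k), σ w = t k
  Φ_zero : ∀ k, Φ k 0 = zm k
  Φ_one : ∀ k, Φ k 1 = z (t k)
  x_eq_z_σ : ∀ w ∈ Icc 0 T, (∀ k, w ∉ Ico (s k) (u k)) → x w = z (σ w)
  x_eq_Φ : ∀ k, ∀ v ∈ Icc (0 : ℝ) 1, x (s k + v * (u k - s k)) = Φ k v

namespace JumpInterpolation

variable {E ι : Type*} [PseudoEMetricSpace E] (J : JumpInterpolation E ι)
  {p a a' : ℝ} {j k : ι}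

noncomputable def progress (k : ι) (w : ℝ) : ℝ :=
  projIcc 0 1 zero_le_one ((w - J.s k) / (J.u k - J.s k))

theorem progress_mem (k : ι) (w : ℝ) : J.progress k w ∈ Icc 0 1 :=
  Subtype.prop _

theorem monotone_progress (k : ι) : Monotone (J.progress k) := fun _ _ h =>
  monotone_projIcc _ <| div_le_div_of_nonneg_right (by linarith) (sub_pos.2 (J.s_lt_u k)).le

theorem progress_of_le (h : a ≤ J.s k) : J.progress k a = 0 := by
  rw [progress, projIcc_of_le_left]
  exact div_nonpos_of_nonpos_of_nonneg (by linarith) (sub_pos.2 (J.s_lt_u k)).le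

theorem progress_of_ge (h : J.u k ≤ a) : J.progress k a = 1 := by
  rw [progress, projIcc_of_right_le _ ((le_div_iff₀ (sub_pos.2 (J.s_lt_u k))).2 (by linarith))]

theorem x_eq_Φ_progress (ha : a ∈ Icc (J.s k) (J.u k)) : J.x a = J.Φ k (J.progress k a) := by
  have hsu := sub_pos.2 (J.s_lt_u k)
  have hθ : (a - J.s k) / (J.u k - J.s k) ∈ Icc (0 : ℝ) 1 :=
    ⟨div_nonneg (by linarith [ha.1]) hsu.le, (div_le_one hsu).2 (by linarith [ha.2])⟩
  rw [progress, projIcc_of_mem _ hθ, ← J.x_eq_Φ k _ hθ, div_mul_cancel₀ _ hsu.ne']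
  congr 1
  ring

theorem eq_of_mem_Icc (hj : a ∈ Icc (J.s j) (J.u j)) (hk : a ∈ Icc (J.s k) (J.u k)) : j = k :=
  J.t_injective ((J.σ_eq j a hj).symm.trans (J.σ_eq k a hk))

theorem σ_le_t (ha : a ∈ Icc 0 J.T) (h : a ≤ J.s k) : J.σ a ≤ J.t k :=
  J.σ_eq k _ (left_mem_Icc.2 (J.s_lt_u k).le) ▸
    J.monotoneOn_σ ha (J.Icc_subset k (left_mem_Icc.2 (J.s_lt_u k).le)) h

theorem u_le_s_of_ne (hj : a ∈ Ico (J.s j) (J.u j)) (hk : a' ∈ Ico (J.s k) (J.u k))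
    (hjk : j ≠ k) (h : a ≤ a') : J.u j ≤ J.s k := by
  by_contra! hlt
  refine hjk (J.eq_of_mem_Icc (a := max (J.s j) (J.s k))
    ⟨le_max_left _ _, ?_⟩ ⟨le_max_right _ _, ?_⟩)
  · exact max_le (J.s_lt_u j).le hlt.le
  · exact max_le (by linarith [hj.1, hk.2]) (J.s_lt_u k).le

theorem t_lt_t_of_ne (hj : a ∈ Ico (J.s j) (J.u j)) (hk : a' ∈ Ico (J.s k) (J.u k))
    (hjk : j ≠ k) (h : a ≤ a') : J.t j < J.t k := by
  have hu : J.u j ∈ Icc (J.s j) (J.u j) := right_mem_Icc.2 (J.s_lt_u j).le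
  refine lt_of_le_of_ne ?_ (hjk ∘ fun h => J.t_injective h)
  rw [← J.σ_eq j _ hu]
  exact J.σ_le_t (J.Icc_subset j hu) (J.u_le_s_of_ne hj hk hjk h)

open Classical in
/-- The point of the chain of values and left limits of `z` at which the step `[a, a']`
arrives; the left limit `zm k` is used only when `σ a < t k`, which keeps the chain ordered in
time. -/
noncomputable def entryPoint (a a' : ℝ) : E :=
  if h : ∃ k, a' ∈ Ico (J.s k) (J.u k) ∧ J.σ a < J.t k then J.zm h.choose else J.z (J.σ a')

theorem entryPoint_of_mem (hk : a' ∈ Ico (J.s k) (J.u k)) (h : J.σ a < J.t k) :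
    J.entryPoint a a' = J.zm k := by
  have hex : ∃ k, a' ∈ Ico (J.s k) (J.u k) ∧ J.σ a < J.t k := ⟨k, hk, h⟩
  rw [entryPoint, dif_pos hex,
    J.eq_of_mem_Icc (Ico_subset_Icc_self hex.choose_spec.1) (Ico_subset_Icc_self hk)]

theorem entryPoint_of_forall_not_mem (h : ∀ k, a' ∉ Ico (J.s k) (J.u k)) :
    J.entryPoint a a' = J.z (J.σ a') :=
  dif_neg fun ⟨k, hk, _⟩ => h k hk

theorem entryPoint_mem_closure (ha : a ∈ Icc 0 J.T) (ha' : a' ∈ Icc 0 J.T) (h : a ≤ a') :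
    J.entryPoint a a' ∈ closure (J.z '' Icc (J.σ a) (J.σ a')) := by
  unfold entryPoint
  split_ifs with hex
  · obtain ⟨hmem, hlt⟩ := hex.choose_spec
    rw [J.σ_eq _ _ (Ico_subset_Icc_self hmem)]
    exact mem_closure_image_Icc_of_tendsto hlt (J.tendsto_zm _)
  · exact subset_closure (mem_image_of_mem _ ⟨J.monotoneOn_σ ha ha' h, le_rfl⟩)

noncomputable def edistΦ (k : ι) (a a' : ℝ) : ℝ≥0∞ :=
  edist (J.Φ k (J.progress k a)) (J.Φ k (J.progress k a'))

noncomputable def jump (k : ι) : ℝ≥0∞ :=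
  edist (J.zm k) (J.z (J.t k))

/-- The jump `k`, charged to the unique step of a partition that reaches `s k`. -/
noncomputable def entryJump (k : ι) (a a' : ℝ) : ℝ≥0∞ :=
  if a < J.s k ∧ J.s k ≤ a' then J.jump k else 0

theorem edist_x_z_σ (hj : a ∈ Icc (J.s j) (J.u j)) (h : J.u j ≤ a') :
    edist (J.x a) (J.z (J.σ a)) = J.edistΦ j a a' := by
  rw [edistΦ, J.x_eq_Φ_progress hj, J.σ_eq j a hj, J.progress_of_ge h, J.Φ_one]

theorem edist_zm_x (h : a ≤ J.s k) (hk : a' ∈ Icc (J.s k) (J.u k)) :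
    edist (J.zm k) (J.x a') = J.edistΦ k a a' := by
  rw [edistΦ, J.x_eq_Φ_progress hk, J.progress_of_le h, J.Φ_zero]

theorem exists_edist_x_le_of_mem (hp : 0 < p) (ha : a ∈ Icc 0 J.T) (h : a ≤ a')
    (hk : a' ∈ Ico (J.s k) (J.u k)) :
    ∃ α μ γ : ℝ≥0∞, edist (J.x a) (J.x a') ≤ α + μ + γ ∧
      μ ≤ edist (J.z (J.σ a)) (J.entryPoint a a') ∧
      α ^ p + γ ^ p ≤ ∑' k, (J.edistΦ k a a' ^ p + J.entryJump k a a' ^ p) := by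
  have hk' := Ico_subset_Icc_self hk
  by_cases hak : a ∈ Ico (J.s k) (J.u k)
  · refine ⟨J.edistΦ k a a', 0, 0, ?_, bot_le, ?_⟩
    · rw [J.x_eq_Φ_progress (Ico_subset_Icc_self hak), J.x_eq_Φ_progress hk', add_zero, add_zero]
      rfl
    · rw [ENNReal.zero_rpow_of_pos hp, add_zero]
      exact le_self_add.trans (ENNReal.le_tsum k)
  have hs : a < J.s k := not_le.1 fun hle => hak ⟨hle, h.trans_lt hk.2⟩
  have hε : J.entryJump k a a' = J.jump k := if_pos ⟨hs, hk.1⟩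
  by_cases hσ : J.σ a < J.t k
  · refine ⟨edist (J.x a) (J.z (J.σ a)), _, J.edistΦ k a a', ?_, le_rfl, ?_⟩
    · rw [J.entryPoint_of_mem hk hσ, ← J.edist_zm_x hs.le hk']
      exact edist_triangle4 _ _ _ _
    by_cases haj : ∃ j, a ∈ Ico (J.s j) (J.u j)
    · obtain ⟨j, hj⟩ := haj
      have hjk : j ≠ k := by rintro rfl; exact hak hj
      rw [J.edist_x_z_σ (Ico_subset_Icc_self hj) ((J.u_le_s_of_ne hj hk hjk h).trans hk.1)]
      exact (add_le_add le_self_add le_self_add).trans (ENNReal.add_le_tsum hjk)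
    · rw [J.x_eq_z_σ a ha (not_exists.1 haj), edist_self, ENNReal.zero_rpow_of_pos hp, zero_add]
      exact le_self_add.trans (ENNReal.le_tsum k)
  · have hout : ∀ j, a ∉ Ico (J.s j) (J.u j) := fun j hj =>
      hσ <| J.σ_eq j a (Ico_subset_Icc_self hj) ▸
        J.t_lt_t_of_ne hj hk (by rintro rfl; exact hak hj) h
    have hσt : J.σ a = J.t k := le_antisymm (J.σ_le_t ha hs.le) (not_lt.1 hσ)
    refine ⟨J.jump k, 0, J.edistΦ k a a', ?_, bot_le, ?_⟩
    · rw [J.x_eq_z_σ a ha hout, hσt, add_zero, ← J.edist_zm_x hs.le hk', jump,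
        edist_comm (J.zm k)]
      exact edist_triangle _ _ _
    · rw [← hε, add_comm]
      exact ENNReal.le_tsum k

theorem exists_edist_x_le_of_forall_not_mem (hp : 0 < p) (ha : a ∈ Icc 0 J.T)
    (ha' : a' ∈ Icc 0 J.T) (h : a ≤ a') (hout : ∀ k, a' ∉ Ico (J.s k) (J.u k)) :
    ∃ α μ γ : ℝ≥0∞, edist (J.x a) (J.x a') ≤ α + μ + γ ∧
      μ ≤ edist (J.z (J.σ a)) (J.entryPoint a a') ∧
      α ^ p + γ ^ p ≤ ∑' k, (J.edistΦ k a a' ^ p + J.entryJump k a a' ^ p) := by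
  refine ⟨edist (J.x a) (J.z (J.σ a)), _, 0, ?_, le_rfl, ?_⟩
  · rw [J.entryPoint_of_forall_not_mem hout, ← J.x_eq_z_σ a' ha' hout, add_zero]
    exact edist_triangle _ _ _
  rw [ENNReal.zero_rpow_of_pos hp, add_zero]
  by_cases haj : ∃ j, a ∈ Ico (J.s j) (J.u j)
  · obtain ⟨j, hj⟩ := haj
    have hu : J.u j ≤ a' := not_lt.1 fun hlt => hout j ⟨hj.1.trans h, hlt⟩
    rw [J.edist_x_z_σ (Ico_subset_Icc_self hj) hu]
    exact le_self_add.trans (ENNReal.le_tsum j)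
  · rw [J.x_eq_z_σ a ha (not_exists.1 haj), edist_self, ENNReal.zero_rpow_of_pos hp]
    exact bot_le

theorem edist_x_rpow_le (hp : 1 ≤ p) (ha : a ∈ Icc 0 J.T) (ha' : a' ∈ Icc 0 J.T)
    (h : a ≤ a') :
    edist (J.x a) (J.x a') ^ p ≤ 3 ^ (p - 1) * (edist (J.z (J.σ a)) (J.entryPoint a a') ^ p +
      ∑' k, (J.edistΦ k a a' ^ p + J.entryJump k a a' ^ p)) := by
  have hp0 : 0 < p := zero_lt_one.trans_le hp
  obtain ⟨α, μ, γ, hd, hμ, hαγ⟩ := (em (∃ k, a' ∈ Ico (J.s k) (J.u k))).elim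
    (fun ⟨_, hk⟩ => J.exists_edist_x_le_of_mem hp0 ha h hk)
    (fun hout => J.exists_edist_x_le_of_forall_not_mem hp0 ha ha' h (not_exists.1 hout))
  calc edist (J.x a) (J.x a') ^ p ≤ (α + μ + γ) ^ p := ENNReal.rpow_le_rpow hd hp0.le
    _ ≤ 3 ^ (p - 1) * (α ^ p + μ ^ p + γ ^ p) :=
        ENNReal.rpow_add_add_le_mul_rpow_add_rpow_add_rpow α μ γ hp
    _ = 3 ^ (p - 1) * (μ ^ p + (α ^ p + γ ^ p)) := by ring
    _ ≤ _ := by gcongr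

section Partition

variable {n : ℕ} {v : ℕ → ℝ}

theorem sum_edist_entryPoint_rpow_le (hv : Monotone v) (h0 : v 0 = 0) (hn : v n = J.T) :
    ∑ i ∈ Finset.range n, edist (J.z (J.σ (v i))) (J.entryPoint (v i) (v (i + 1))) ^ p ≤
      eVar p J.z 0 J.T := by
  have hvT : ∀ i ≤ n, v i ∈ Icc 0 J.T := fun i hi => ⟨h0 ▸ hv i.zero_le, hn ▸ hv hi⟩
  refine (Finset.sum_le_sum fun _ _ => le_self_add).trans <|
    sum_edist_rpow_le_eVar_of_mem_closure (τ := J.σ ∘ v) (fun i hi => ?_) ?_ ?_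
  · exact J.entryPoint_mem_closure (hvT i hi.le) (hvT (i + 1) hi) (hv i.le_succ)
  · simp [h0, J.σ_zero]
  · simp [hn, J.σ_T]

theorem sum_edistΦ_rpow_le (k : ι) (hv : Monotone v) :
    ∑ i ∈ Finset.range n, J.edistΦ k (v i) (v (i + 1)) ^ p ≤ eVar p (J.Φ k) 0 1 :=
  sum_edist_rpow_le_eVar (fun i _ => J.monotone_progress k (hv i.le_succ))
    (J.progress_mem k _).1 (J.progress_mem k _).2

theorem sum_entryJump_rpow_le (hp : 0 < p) (k : ι) (hv : Monotone v) :
    ∑ i ∈ Finset.range n, J.entryJump k (v i) (v (i + 1)) ^ p ≤ J.jump k ^ p := by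
  simp only [entryJump, apply_ite (· ^ p), ENNReal.zero_rpow_of_pos hp]
  exact hv.sum_ite_lt_le_le _ _ n

end Partition

theorem jump_rpow_le_eVar (k : ι) : J.jump k ^ p ≤ eVar p (J.Φ k) 0 1 := by
  simpa [jump, J.Φ_zero, J.Φ_one] using edist_rpow_le_eVar (f := J.Φ k) (p := p) zero_le_one

theorem tsum_jump_rpow_le_eVar : ∑' k, J.jump k ^ p ≤ eVar p J.z 0 J.T :=
  tsum_edist_rpow_le_eVar J.t_injective J.t_mem J.tendsto_zm

theorem eVar_x_le (hp : 1 ≤ p) {M : ℝ≥0∞}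
    (hΦ : ∀ k, eVar p (J.Φ k) 0 1 ≤ M * J.jump k ^ p) :
    eVar p J.x 0 J.T ≤ 3 ^ (p - 1) * (1 + 2 * M) * eVar p J.z 0 J.T := by
  have hp0 : 0 < p := zero_lt_one.trans_le hp
  refine eVar_le fun n v hv h0 hn => ?_
  have hvT : ∀ i ≤ n, v i ∈ Icc 0 J.T := fun i hi => ⟨h0 ▸ hv i.zero_le, hn ▸ hv hi⟩
  have hΦsum : ∀ k, ∑ i ∈ Finset.range n, (J.edistΦ k (v i) (v (i + 1)) ^ p +
      J.entryJump k (v i) (v (i + 1)) ^ p) ≤ 2 * M * J.jump k ^ p := by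
    intro k
    rw [Finset.sum_add_distrib, mul_assoc, two_mul]
    exact add_le_add ((J.sum_edistΦ_rpow_le k hv).trans (hΦ k))
      ((J.sum_entryJump_rpow_le hp0 k hv).trans ((J.jump_rpow_le_eVar k).trans (hΦ k)))
  calc ∑ i ∈ Finset.range n, edist (J.x (v i)) (J.x (v (i + 1))) ^ p
      ≤ ∑ i ∈ Finset.range n, 3 ^ (p - 1) *
          (edist (J.z (J.σ (v i))) (J.entryPoint (v i) (v (i + 1))) ^ p +
            ∑' k, (J.edistΦ k (v i) (v (i + 1)) ^ p + J.entryJump k (v i) (v (i + 1)) ^ p)) :=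
        Finset.sum_le_sum fun i hi => J.edist_x_rpow_le hp
          (hvT i (Finset.mem_range.1 hi).le) (hvT (i + 1) (Finset.mem_range.1 hi)) (hv i.le_succ)
    _ = 3 ^ (p - 1) *
          (∑ i ∈ Finset.range n, edist (J.z (J.σ (v i))) (J.entryPoint (v i) (v (i + 1))) ^ p +
            ∑' k, ∑ i ∈ Finset.range n,
              (J.edistΦ k (v i) (v (i + 1)) ^ p + J.entryJump k (v i) (v (i + 1)) ^ p)) := by
        rw [← Finset.mul_sum, Finset.sum_add_distrib,
          Summable.tsum_finsetSum fun _ _ => ENNReal.summable]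
    _ ≤ 3 ^ (p - 1) * (eVar p J.z 0 J.T + ∑' k, 2 * M * J.jump k ^ p) := by
        gcongr
        · exact J.sum_edist_entryPoint_rpow_le hv h0 hn
        · exact hΦsum _
    _ ≤ 3 ^ (p - 1) * (eVar p J.z 0 J.T + 2 * M * eVar p J.z 0 J.T) := by
        rw [ENNReal.tsum_mul_left]
        gcongr
        exact J.tsum_jump_rpow_le_eVar
    _ = 3 ^ (p - 1) * (1 + 2 * M) * eVar p J.z 0 J.T := by ring

end JumpInterpolation

theorem ENNReal.ofReal_mul_dist_rpow {E : Type*} [PseudoMetricSpace E] {C p : ℝ} (hC : 0 ≤ C)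
    (hp : 0 ≤ p) (y y' : E) :
    ENNReal.ofReal ((C * dist y y') ^ p) = ENNReal.ofReal (C ^ p) * edist y y' ^ p := by
  rw [Real.mul_rpow hC dist_nonneg, ENNReal.ofReal_mul (by positivity),
    ← ENNReal.ofReal_rpow_of_nonneg dist_nonneg hp, ← edist_dist]

theorem three_rpow_mul_one_add_two_mul_le {C p : ℝ} (hC : 0 ≤ C) :
    (3 : ℝ≥0∞) ^ (p - 1) * (1 + 2 * ENNReal.ofReal (C ^ p)) ≤
      ENNReal.ofReal (1 + 2 ^ p + 3 ^ (p - 1) + C ^ p * (1 + 2 ^ p + 2 * 3 ^ (p - 1))) := by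
  have h2 : (0 : ℝ) ≤ 2 ^ p := by positivity
  have h3 : (0 : ℝ) ≤ 3 ^ (p - 1) := by positivity
  have hCp : (0 : ℝ) ≤ C ^ p := by positivity
  rw [← ENNReal.ofReal_ofNat 3, ENNReal.ofReal_rpow_of_pos (by norm_num),
    ← ENNReal.ofReal_ofNat 2, ← ENNReal.ofReal_mul (by norm_num), ← ENNReal.ofReal_one,
    ← ENNReal.ofReal_add (by norm_num) (by positivity), ← ENNReal.ofReal_mul h3]
  exact ENNReal.ofReal_le_ofReal (by nlinarith [mul_nonneg h2 hCp])

theorem pVar_jump_interpolation_bound_general {E : Type*} [MetricSpace E]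
    (T p C : ℝ) (hp : 1 ≤ p) (hC : 0 < C)
    (J : Set (E × E)) (φ : E → E → ℝ → E)
    (hφ0 : ∀ a b, (a, b) ∈ J → φ a b 0 = a)
    (hφ1 : ∀ a b, (a, b) ∈ J → φ a b 1 = b)
    (z x : ℝ → E) (ι : Type)
    (t : ι → ℝ) (ht : ∀ k, t k ∈ Ioc 0 T) (htinj : Function.Injective t)
    (zm : ι → E)
    (hzm : ∀ k, Tendsto z (nhdsWithin (t k) (Iio (t k))) (nhds (zm k)))
    (hjump : ∀ k, (zm k, z (t k)) ∈ J)
    (hbound : ∀ k, eVar p (φ (zm k) (z (t k))) 0 1 ≤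
      ENNReal.ofReal ((C * dist (zm k) (z (t k))) ^ p))
    (s u : ι → ℝ) (hsu : ∀ k, s k < u k)
    (hsub : ∀ k, Icc (s k) (u k) ⊆ Icc 0 T)
    (σ : ℝ → ℝ) (hσmono : MonotoneOn σ (Icc 0 T))
    (hσ0 : σ 0 = 0) (hσT : σ T = T)
    (hσconst : ∀ k, ∀ w ∈ Icc (s k) (u k), σ w = t k)
    (hx₁ : ∀ w ∈ Icc 0 T, (∀ k, w ∉ Ico (s k) (u k)) → x w = z (σ w))
    (hx₂ : ∀ k, ∀ v ∈ Icc (0 : ℝ) 1,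
      x (s k + v * (u k - s k)) = φ (zm k) (z (t k)) v) :
    eVar p x 0 T ≤
      ENNReal.ofReal
          (1 + 2 ^ p + 3 ^ (p - 1) + C ^ p * (1 + 2 ^ p + 2 * 3 ^ (p - 1))) *
        eVar p z 0 T := by
  let I : JumpInterpolation E ι :=
    { T, z, x, t, zm, s, u, σ
      Φ := fun k => φ (zm k) (z (t k))
      t_injective := htinj
      t_mem := ht
      tendsto_zm := hzm
      s_lt_u := hsu
      Icc_subset := hsub
      monotoneOn_σ := hσmono
      σ_zero := hσ0
      σ_T := hσT
      σ_eq := hσconst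
      Φ_zero := fun k => hφ0 _ _ (hjump k)
      Φ_one := fun k => hφ1 _ _ (hjump k)
      x_eq_z_σ := hx₁
      x_eq_Φ := hx₂ }
  have hΦ : ∀ k, eVar p (I.Φ k) 0 1 ≤ ENNReal.ofReal (C ^ p) * I.jump k ^ p := fun k =>
    (hbound k).trans_eq (ENNReal.ofReal_mul_dist_rpow hC.le (zero_le_one.trans hp) _ _)
  calc eVar p x 0 T ≤ 3 ^ (p - 1) * (1 + 2 * ENNReal.ofReal (C ^ p)) * eVar p z 0 T :=
        I.eVar_x_le hp hΦ
    _ ≤ _ := by gcongr; exact three_rpow_mul_one_add_two_mul_le hC.le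

/-- Let `z` be a càdlàg path on `[0,T]` with jumps `(zm k, z (t k)) ∈ J`
and `φ` a path function on `J` with `‖φ(a,b)‖_{p-var;[0,1]} ≤ C d(a,b)` at every jump of
`z`.  If `x` is the continuous path obtained from `z` by traversing each jump via `φ` over
an inserted interval `[s k, u k]` (the original motion of `z` being run via the monotone
surjective time change `σ`), then
`‖x‖_{p-var;[0,T]}^p ≤ R ‖z‖_{p-var;[0,T]}^p` with
`R = 1 + 2^p + 3^(p-1) + C^p (1 + 2^p + 2·3^(p-1))`. -/
theorem pVar_jump_interpolation_bound {E : Type*} [MetricSpace E]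
    (T p C : ℝ) (hT : 0 < T) (hp : 1 ≤ p) (hC : 0 < C)
    (J : Set (E × E)) (φ : E → E → ℝ → E)
    (hφ0 : ∀ a b, (a, b) ∈ J → φ a b 0 = a)
    (hφ1 : ∀ a b, (a, b) ∈ J → φ a b 1 = b)
    (z x : ℝ → E) (ι : Type) (hι : Countable ι)
    (t : ι → ℝ) (ht : ∀ k, t k ∈ Ioc 0 T) (htinj : Function.Injective t)
    (zm : ι → E)
    (hzm : ∀ k, Tendsto z (nhdsWithin (t k) (Iio (t k))) (nhds (zm k)))
    (hcont : ∀ s ∈ Ioc 0 T, s ∉ Set.range t →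
      Tendsto z (nhdsWithin s (Iio s)) (nhds (z s)))
    (hjump : ∀ k, (zm k, z (t k)) ∈ J)
    (hbound : ∀ k, eVar p (φ (zm k) (z (t k))) 0 1 ≤
      ENNReal.ofReal ((C * dist (zm k) (z (t k))) ^ p))
    (s u : ι → ℝ) (hsu : ∀ k, s k < u k)
    (hsub : ∀ k, Icc (s k) (u k) ⊆ Icc 0 T)
    (hdisj : Pairwise fun j k => Disjoint (Ioo (s j) (u j)) (Ioo (s k) (u k)))
    (σ : ℝ → ℝ) (hσmono : MonotoneOn σ (Icc 0 T))
    (hσ0 : σ 0 = 0) (hσT : σ T = T)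
    (hσsurj : Icc 0 T ⊆ σ '' Icc 0 T)
    (hσconst : ∀ k, ∀ w ∈ Icc (s k) (u k), σ w = t k)
    (hx₁ : ∀ w ∈ Icc 0 T, (∀ k, w ∉ Ico (s k) (u k)) → x w = z (σ w))
    (hx₂ : ∀ k, ∀ v ∈ Icc (0 : ℝ) 1,
      x (s k + v * (u k - s k)) = φ (zm k) (z (t k)) v) :
    eVar p x 0 T ≤
      ENNReal.ofReal
          (1 + 2 ^ p + 3 ^ (p - 1) + C ^ p * (1 + 2 ^ p + 2 * 3 ^ (p - 1))) *
        eVar p z 0 T :=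
  pVar_jump_interpolation_bound_general T p C hp hC J φ hφ0 hφ1 z x ι t ht htinj zm hzm hjump hbound
    s u hsu hsub σ hσmono hσ0 hσT hσconst hx₁ hx₂
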